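/- arXiv:2108.07213 — 2 statements merged into one kernel-verified Lean document; each statement's English description precedes it below -/
import Mathlib

section
/- Transfer of the closing property along a line missing the conic: Let W ⊆ ℝ³ be a 2-dimensional subspace with ⟨X,X⟩ ≠ 0 for every X ∈ W \ {0} (the line ℓ does not meet the conic C). Let P₁,…,P_{2n} ∈ W \ {0} have the closing property with respect to the Minkowski form. Let B be any nondegenerate symmetric bilinear form on ℝ³ whose restriction to W is a nonzero scalar multiple of the restriction of the Minkowski form to W (so the conic D_B has the same complex intersections with ℓ as C). Then P₁,…,P_{2n} have the closing property with respect to B. -/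
/-! Because `W` misses the conic of each form, `ℝ³ = W ⊕ W^⊥` for both the Minkowski form and
`B = c ⟨·,·⟩` (on `W`). On `W` every `B`-reversion is `c` times the Minkowski reversion, so the
`B`-chain is `c^{2n} d` there, where `d` is the Minkowski closing constant. On the orthogonal
complement of `W` every reversion in a point of `W` is multiplication by the norm of that point;
for the Minkowski form this shows `d = ∏ ⟨Pᵢ,Pᵢ⟩`, and for `B` it gives the constant
`∏ B(Pᵢ,Pᵢ) = c^{2n} d` on `W^⊥`, the same as on `W`. -/

/-- Minkowski product on ℝ³. -/
def mink (X Y : Fin 3 → ℝ) : ℝ := X 0 * Y 0 + X 1 * Y 1 - X 2 * Y 2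

/-- The reversion map with respect to the (bilinear) form `B` in the point `P`
(with `B P P ≠ 0`): `M_P^B X = B(P,P)X − 2B(X,P)P`. -/
def revB (B : (Fin 3 → ℝ) → (Fin 3 → ℝ) → ℝ) (P X : Fin 3 → ℝ) : Fin 3 → ℝ :=
  B P P • X - (2 * B X P) • P

/-- `chainB B n P X = (M_{P n}^B ∘ ⋯ ∘ M_{P 1}^B) X`, the composition of the reversions
with respect to `B` in `P 0, …, P (n-1)`, applied in this order. -/
def chainB (B : (Fin 3 → ℝ) → (Fin 3 → ℝ) → ℝ) :
    (n : ℕ) → (Fin n → (Fin 3 → ℝ)) → (Fin 3 → ℝ) → (Fin 3 → ℝ)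
  | 0, _, X => X
  | n + 1, P, X => revB B (P (Fin.last n)) (chainB B n (fun i => P i.castSucc) X)

/-- The points `P 0, …, P (n-1)` have the closing property with respect to the form `B`
iff `M_{P n}^B ∘ ⋯ ∘ M_{P 1}^B` is a nonzero scalar multiple of the identity. For
`B = mink` this is the closing property with respect to the conic `C`. -/
def closesB (B : (Fin 3 → ℝ) → (Fin 3 → ℝ) → ℝ) (n : ℕ) (P : Fin n → (Fin 3 → ℝ)) :
    Prop :=
  ∃ c : ℝ, c ≠ 0 ∧ ∀ X, chainB B n P X = c • X

open LinearMap (BilinForm)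

theorem LinearMap.BilinForm.isCompl_orthogonal_of_anisotropic {K V : Type*} [Field K]
    [AddCommGroup V] [Module K V] [FiniteDimensional K V] {β : BilinForm K V} (hβ : β.IsRefl)
    {W : Submodule K V} (hW : ∀ x ∈ W, x ≠ 0 → β x x ≠ 0) : IsCompl W (β.orthogonal W) := by
  rw [isCompl_orthogonal_iff_disjoint hβ, Submodule.disjoint_def]
  intro x hxW hx
  by_contra hx0
  exact hW x hxW hx0 (hx x hxW)

theorem mink_add_smul_left (c : ℝ) (x x' y : Fin 3 → ℝ) :
    mink (c • x + x') y = c * mink x y + mink x' y := by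
  simp only [mink, Pi.add_apply, Pi.smul_apply, smul_eq_mul]
  ring

theorem mink_comm (x y : Fin 3 → ℝ) : mink x y = mink y x := by
  simp only [mink]
  ring

def symmBilinForm (B : (Fin 3 → ℝ) → (Fin 3 → ℝ) → ℝ)
    (hlin : ∀ (c : ℝ) (x x' y : Fin 3 → ℝ), B (c • x + x') y = c * B x y + B x' y)
    (hsymm : ∀ x y, B x y = B y x) : BilinForm ℝ (Fin 3 → ℝ) :=
  have hadd x x' y : B (x + x') y = B x y + B x' y := by simpa using hlin 1 x x' y
  have hsmul (c : ℝ) x y : B (c • x) y = c * B x y := by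
    have h0 : B 0 y = 0 := by linarith [(by simpa using hlin (-1) y y y : B 0 y = -B y y + B y y)]
    simpa [h0] using hlin c x 0 y
  LinearMap.mk₂ ℝ B hadd hsmul (fun x y y' => by rw [hsymm, hadd, hsymm y, hsymm y'])
    (fun c x y => by rw [hsymm, hsmul, hsymm y, smul_eq_mul])

theorem symmBilinForm_apply (B : (Fin 3 → ℝ) → (Fin 3 → ℝ) → ℝ)
    (hlin : ∀ (c : ℝ) (x x' y : Fin 3 → ℝ), B (c • x + x') y = c * B x y + B x' y)
    (hsymm : ∀ x y, B x y = B y x) (x y : Fin 3 → ℝ) : symmBilinForm B hlin hsymm x y = B x y :=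
  rfl

theorem symmBilinForm_isRefl (B : (Fin 3 → ℝ) → (Fin 3 → ℝ) → ℝ)
    (hlin : ∀ (c : ℝ) (x x' y : Fin 3 → ℝ), B (c • x + x') y = c * B x y + B x' y)
    (hsymm : ∀ x y, B x y = B y x) : (symmBilinForm B hlin hsymm).IsRefl := fun x y h => by
  rwa [symmBilinForm_apply, hsymm, ← symmBilinForm_apply B hlin hsymm]

theorem chainB_mem (B : (Fin 3 → ℝ) → (Fin 3 → ℝ) → ℝ) {W : Submodule ℝ (Fin 3 → ℝ)} :
    ∀ {m : ℕ} {P : Fin m → (Fin 3 → ℝ)} {X : Fin 3 → ℝ}, (∀ i, P i ∈ W) → X ∈ W →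
      chainB B m P X ∈ W
  | 0, _, _, _, hX => hX
  | _ + 1, _, _, hP, hX =>
    W.sub_mem (W.smul_mem _ (chainB_mem B (fun _ => hP _) hX)) (W.smul_mem _ (hP _))

section Chain

variable {β : BilinForm ℝ (Fin 3 → ℝ)}

theorem revB_add (Q X Y : Fin 3 → ℝ) :
    revB (β · ·) Q (X + Y) = revB (β · ·) Q X + revB (β · ·) Q Y := by
  simp only [revB, map_add, LinearMap.add_apply]
  module

theorem chainB_add : ∀ {m : ℕ} (P : Fin m → (Fin 3 → ℝ)) (X Y : Fin 3 → ℝ),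
    chainB (β · ·) m P (X + Y) = chainB (β · ·) m P X + chainB (β · ·) m P Y
  | 0, _, _, _ => rfl
  | _ + 1, _, _, _ => by simp only [chainB, chainB_add, revB_add]

theorem chainB_eq_prod_smul_of_orthogonal :
    ∀ {m : ℕ} {P : Fin m → (Fin 3 → ℝ)} {Z : Fin 3 → ℝ}, (∀ i, β Z (P i) = 0) →
      chainB (β · ·) m P Z = (∏ i, β (P i) (P i)) • Z
  | 0, _, _, _ => by simp [chainB]
  | m + 1, P, Z, hZ => by
    rw [chainB, chainB_eq_prod_smul_of_orthogonal (fun _ => hZ _), Fin.prod_univ_castSucc]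
    simp only [revB, map_smul, LinearMap.smul_apply, smul_eq_mul, hZ, mul_zero]
    module

theorem chainB_eq_pow_smul_of_mem {μ : BilinForm ℝ (Fin 3 → ℝ)} {W : Submodule ℝ (Fin 3 → ℝ)}
    {c : ℝ} (hβμ : ∀ X ∈ W, ∀ Y ∈ W, β X Y = c * μ X Y) :
    ∀ {m : ℕ} {P : Fin m → (Fin 3 → ℝ)} {X : Fin 3 → ℝ}, (∀ i, P i ∈ W) → X ∈ W →
      chainB (β · ·) m P X = c ^ m • chainB (μ · ·) m P X
  | 0, _, _, _, _ => by simp [chainB]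
  | m + 1, P, X, hP, hX => by
    have hY := chainB_mem (μ · ·) (fun i => hP i.castSucc) hX
    rw [chainB, chainB_eq_pow_smul_of_mem hβμ (fun _ => hP _) hX, chainB]
    simp only [revB, map_smul, LinearMap.smul_apply, smul_eq_mul, hβμ _ (hP _) _ (hP _),
      hβμ _ hY _ (hP _)]
    module

end Chain

section Closing

variable {β : BilinForm ℝ (Fin 3 → ℝ)} {W : Submodule ℝ (Fin 3 → ℝ)} {m : ℕ}
  {P : Fin m → (Fin 3 → ℝ)}

theorem exists_ne_zero_mem_orthogonal (hW : IsCompl W (β.orthogonal W)) (hWtop : W ≠ ⊤) :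
    ∃ Z ∈ β.orthogonal W, Z ≠ 0 :=
  Submodule.exists_mem_ne_zero_of_ne_bot fun h => hWtop (by simpa [h] using hW.sup_eq_top)

theorem eq_prod_of_chainB_eq_smul (hβ : β.IsRefl) (hP : ∀ i, P i ∈ W) {Z : Fin 3 → ℝ}
    (hZ : Z ∈ β.orthogonal W) (hZ0 : Z ≠ 0) {d : ℝ} (hd : chainB (β · ·) m P Z = d • Z) :
    d = ∏ i, β (P i) (P i) := by
  rw [chainB_eq_prod_smul_of_orthogonal fun i => hβ _ _ (hZ _ (hP i))] at hd
  exact (smul_left_injective ℝ hZ0 hd).symm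

theorem chainB_eq_prod_smul_of_isCompl (hβ : β.IsRefl) (hW : IsCompl W (β.orthogonal W))
    (hP : ∀ i, P i ∈ W) (hPW : ∀ w ∈ W, chainB (β · ·) m P w = (∏ i, β (P i) (P i)) • w)
    (X : Fin 3 → ℝ) : chainB (β · ·) m P X = (∏ i, β (P i) (P i)) • X := by
  obtain ⟨w, hw, z, hz, rfl⟩ := Submodule.mem_sup.mp (hW.sup_eq_top ▸ Submodule.mem_top (x := X))
  rw [chainB_add, hPW w hw, chainB_eq_prod_smul_of_orthogonal fun i => hβ _ _ (hz _ (hP i)),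
    smul_add]

theorem closesB_of_eq_mul_on_isCompl {μ : BilinForm ℝ (Fin 3 → ℝ)} (hβ : β.IsRefl) (hμ : μ.IsRefl)
    (hβW : IsCompl W (β.orthogonal W)) (hμW : IsCompl W (μ.orthogonal W)) (hWtop : W ≠ ⊤)
    {c : ℝ} (hc : c ≠ 0) (hβμ : ∀ X ∈ W, ∀ Y ∈ W, β X Y = c * μ X Y) (hP : ∀ i, P i ∈ W)
    (hclose : closesB (μ · ·) m P) : closesB (β · ·) m P := by
  obtain ⟨d, hd0, hd⟩ := hclose
  obtain ⟨Z, hZ, hZ0⟩ := exists_ne_zero_mem_orthogonal hμW hWtop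
  have hprod : ∏ i, β (P i) (P i) = c ^ m * d := by
    rw [eq_prod_of_chainB_eq_smul hμ hP hZ hZ0 (hd Z), Finset.prod_congr rfl fun i _ =>
      hβμ _ (hP i) _ (hP i), Finset.prod_mul_distrib, Finset.prod_const, Finset.card_univ,
      Fintype.card_fin]
  refine ⟨c ^ m * d, mul_ne_zero (pow_ne_zero m hc) hd0, ?_⟩
  rw [← hprod]
  refine chainB_eq_prod_smul_of_isCompl hβ hβW hP fun w hw => ?_
  rw [chainB_eq_pow_smul_of_mem hβμ hP hw, hd, hprod, smul_smul]

end Closing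

theorem closing_transfer_missing_general
    (W : Submodule ℝ (Fin 3 → ℝ)) (hdim : Module.finrank ℝ W = 2)
    (hmiss : ∀ X ∈ W, X ≠ 0 → mink X X ≠ 0)
    (n : ℕ) (P : Fin (2 * n) → (Fin 3 → ℝ))
    (hPW : ∀ i, P i ∈ W)
    (hclose : closesB mink (2 * n) P)
    (B : (Fin 3 → ℝ) → (Fin 3 → ℝ) → ℝ)
    (hBlin : ∀ (c : ℝ) (x x' y : Fin 3 → ℝ), B (c • x + x') y = c * B x y + B x' y)
    (hBsymm : ∀ x y, B x y = B y x)
    (hBW : ∃ c : ℝ, c ≠ 0 ∧ ∀ X ∈ W, ∀ Y ∈ W, B X Y = c * mink X Y) :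
    closesB B (2 * n) P := by
  obtain ⟨c, hc, hBW⟩ := hBW
  let β := symmBilinForm B hBlin hBsymm
  let μ := symmBilinForm mink mink_add_smul_left mink_comm
  have hWtop : W ≠ ⊤ := by
    rintro rfl
    simp [finrank_top] at hdim
  have hβ : β.IsRefl := symmBilinForm_isRefl _ _ _
  have hμ : μ.IsRefl := symmBilinForm_isRefl _ _ _
  have hβW : IsCompl W (β.orthogonal W) :=
    BilinForm.isCompl_orthogonal_of_anisotropic hβ fun X hX hX0 => by
      simpa [β, symmBilinForm_apply, hBW X hX X hX, hc] using hmiss X hX hX0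
  have hμW : IsCompl W (μ.orthogonal W) := BilinForm.isCompl_orthogonal_of_anisotropic hμ hmiss
  exact closesB_of_eq_mul_on_isCompl hβ hμ hβW hμW hWtop hc hBW hPW hclose

/-- **Transfer of the closing property along a line missing the conic.**
If the line `W` does not meet the conic `C` and `P 0, …, P (2n-1)` on `W` have the
closing property with respect to the Minkowski form, then they have the closing
property with respect to any nondegenerate symmetric bilinear form `B` whose
restriction to `W` is a nonzero scalar multiple of the restriction of the Minkowski
form to `W` (so the corresponding conic has the same complex intersections with the
line as `C`). -/
theorem closing_transfer_missing
    (W : Submodule ℝ (Fin 3 → ℝ)) (hdim : Module.finrank ℝ W = 2)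
    (hmiss : ∀ X ∈ W, X ≠ 0 → mink X X ≠ 0)
    (n : ℕ) (P : Fin (2 * n) → (Fin 3 → ℝ))
    (hPW : ∀ i, P i ∈ W) (hP0 : ∀ i, P i ≠ 0)
    (hclose : closesB mink (2 * n) P)
    (B : (Fin 3 → ℝ) → (Fin 3 → ℝ) → ℝ)
    (hBlin : ∀ (c : ℝ) (x x' y : Fin 3 → ℝ), B (c • x + x') y = c * B x y + B x' y)
    (hBsymm : ∀ x y, B x y = B y x)
    (hBnd : ∀ x, (∀ y, B x y = 0) → x = 0)
    (hBW : ∃ c : ℝ, c ≠ 0 ∧ ∀ X ∈ W, ∀ Y ∈ W, B X Y = c * mink X Y) :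
    closesB B (2 * n) P :=
  closing_transfer_missing_general W hdim hmiss n P hPW hclose B hBlin hBsymm hBW
end

section
/- Radical axis closing: Let (a₁,b₁), (a₂,b₂) ∈ ℝ² with (a₁,b₁) ≠ (a₂,b₂) and r₁, r₂ > 0, and let B₁, B₂ be the symmetric bilinear forms on ℝ³ obtained by polarizing the quadratic forms q_j(X) = (x₁ − a_j x₃)² + (x₂ − b_j x₃)² − r_j² x₃², defining two circles as conics in the projective plane. Let W be the 2-dimensional subspace of all X ∈ ℝ³ with 2(a₂−a₁)x₁ + 2(b₂−b₁)x₂ + (a₁² + b₁² − r₁² − a₂² − b₂² + r₂²)x₃ = 0 (the radical axis of the two circles, as a projective line; equivalently q₁(X) = q₂(X) on W). If P₁,…,P_{2n} ∈ W \ {0} satisfy B₁(Pᵢ,Pᵢ) ≠ 0 for all i and have the closing property with respect to B₁, then B₂(Pᵢ,Pᵢ) ≠ 0 for all i and P₁,…,P_{2n} have the closing property with respect to B₂. -/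
/-! Write `L` for the linear form cutting out the radical axis `W`. For `P ∈ W` one has
`B₂(X, P) = B₁(X, P) + L(X) ℓ(P)` with `ℓ(X) = -x₃/2`, so each reversion `M_P^{B₂}` differs
from `M_P^{B₁}` by a map `X ↦ L(X) v` with `v ∈ W`, and so does their composite:
`T₂ = T₁ + L ⊗ w = c • id + L ⊗ w` with `w ∈ W`. Since `L ∘ M_P = B(P,P) L` on `W`, the constant
is `c = ∏ B₁(Pᵢ,Pᵢ) = ∏ B₂(Pᵢ,Pᵢ)`. Every reversion scales `B₂` by `B₂(P,P)²`, so `T₂` scales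
`B₂` by `c²`; expanding this for `c • id + L ⊗ w` puts `w` in the kernel of `B₂`, which is
trivial because the circle has positive radius. -/

open LinearMap (BilinForm)

section Rigidity

variable {K V : Type*} [Field K] [NeZero (2 : K)] [AddCommGroup V] [Module K V]

lemma eq_zero_of_smul_add_scales_form {B : BilinForm K V} (hB : B.IsSymm)
    (hsep : LinearMap.SeparatingLeft B) {L : V →ₗ[K] K} (hL : L ≠ 0) {c : K} (hc : c ≠ 0)
    {w : V} (hw : L w = 0)
    (hscale : ∀ X Y, B (c • X + L X • w) (c • Y + L Y • w) = c ^ 2 * B X Y) : w = 0 := by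
  obtain ⟨Z, hZ⟩ : ∃ Z, L Z ≠ 0 := by simpa [LinearMap.ext_iff] using hL
  have key : ∀ X Y, c * (L Y * B w X + L X * B w Y) + L X * L Y * B w w = 0 := by
    intro X Y
    have h := hscale X Y
    simp only [map_add, map_smul, LinearMap.add_apply, LinearMap.smul_apply, smul_eq_mul] at h
    linear_combination h - c * L Y * hB.eq X w
  have hww : B w w = 0 := by
    simpa [hw, hc, hZ] using key w Z
  have hwZ : B w Z = 0 := by
    have : (2 * c * L Z) * B w Z = 0 := by linear_combination key Z Z - L Z * L Z * hww
    simpa [hc, hZ, two_ne_zero] using this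
  refine hsep w fun Y => ?_
  have : (c * L Z) * B w Y = 0 := by linear_combination key Z Y - c * L Y * hwZ - L Z * L Y * hww
  simpa [hc, hZ] using this

end Rigidity

section Reversion

variable {L : (Fin 3 → ℝ) →ₗ[ℝ] ℝ}

lemma revB_add_smul (B : BilinForm ℝ (Fin 3 → ℝ)) (P X Y : Fin 3 → ℝ) (t : ℝ) :
    revB (B · ·) P (X + t • Y) = revB (B · ·) P X + t • revB (B · ·) P Y := by
  simp only [revB, map_add, map_smul, LinearMap.add_apply, LinearMap.smul_apply, smul_eq_mul]
  module

lemma apply_revB_of_apply_eq_zero (B : (Fin 3 → ℝ) → (Fin 3 → ℝ) → ℝ) {P : Fin 3 → ℝ}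
    (hP : L P = 0) (X : Fin 3 → ℝ) : L (revB B P X) = B P P * L X := by
  simp [revB, hP]

lemma apply_chainB_of_apply_eq_zero (B : (Fin 3 → ℝ) → (Fin 3 → ℝ) → ℝ) {n : ℕ}
    {P : Fin n → Fin 3 → ℝ} (hP : ∀ i, L (P i) = 0) (X : Fin 3 → ℝ) :
    L (chainB B n P X) = (∏ i, B (P i) (P i)) * L X := by
  induction n with
  | zero => simp [chainB]
  | succ m ih =>
    rw [chainB, apply_revB_of_apply_eq_zero B (hP _), ih fun i => hP _,
      Fin.prod_univ_castSucc]
    ring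

lemma revB_scales_form {B : BilinForm ℝ (Fin 3 → ℝ)} (hB : B.IsSymm) (P X Y : Fin 3 → ℝ) :
    B (revB (B · ·) P X) (revB (B · ·) P Y) = B P P ^ 2 * B X Y := by
  simp only [revB, map_sub, map_smul, LinearMap.sub_apply, LinearMap.smul_apply, smul_eq_mul]
  rw [hB.eq P Y]
  ring

lemma chainB_scales_form {B : BilinForm ℝ (Fin 3 → ℝ)} (hB : B.IsSymm) {n : ℕ}
    (P : Fin n → Fin 3 → ℝ) (X Y : Fin 3 → ℝ) :
    B (chainB (B · ·) n P X) (chainB (B · ·) n P Y) = (∏ i, B (P i) (P i)) ^ 2 * B X Y := by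
  induction n with
  | zero => simp [chainB]
  | succ m ih =>
    rw [chainB, chainB, revB_scales_form hB, ih, Fin.prod_univ_castSucc]
    ring

lemma exists_chainB_eq_chainB_add (B₁ : (Fin 3 → ℝ) → (Fin 3 → ℝ) → ℝ)
    (B₂ : BilinForm ℝ (Fin 3 → ℝ)) (ℓ : (Fin 3 → ℝ) → ℝ)
    (hdiff : ∀ X P, L P = 0 → B₂ X P = B₁ X P + L X * ℓ P) {n : ℕ} {P : Fin n → Fin 3 → ℝ}
    (hP : ∀ i, L (P i) = 0) :
    ∃ w, L w = 0 ∧ ∀ X, chainB (B₂ · ·) n P X = chainB B₁ n P X + L X • w := by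
  induction n with
  | zero => exact ⟨0, map_zero L, fun X => by simp [chainB]⟩
  | succ m ih =>
    obtain ⟨w, hw, hchain⟩ := ih fun i => hP _
    set p := P (Fin.last m)
    have hp : L p = 0 := hP _
    have hrev : ∀ Y, revB (B₂ · ·) p Y = revB B₁ p Y - (2 * L Y * ℓ p) • p := by
      intro Y
      simp only [revB, hdiff _ _ hp, hp]
      module
    -- the correction of the last reversion at `T₁ X` is a multiple of `L (T₁ X) = (∏ …) * L X`
    refine ⟨revB (B₂ · ·) p w - (2 * (∏ i : Fin m, B₁ (P i.castSucc) (P i.castSucc)) * ℓ p) • p,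
      by simp [apply_revB_of_apply_eq_zero _ hp, hw, hp], fun X => ?_⟩
    rw [chainB, chainB, hchain, revB_add_smul, hrev,
      apply_chainB_of_apply_eq_zero B₁ fun i => hP _]
    module

end Reversion

theorem closesB_of_closesB_of_eq_add (B₁ : (Fin 3 → ℝ) → (Fin 3 → ℝ) → ℝ)
    {B₂ : BilinForm ℝ (Fin 3 → ℝ)} (hB₂ : B₂.IsSymm) (hsep : LinearMap.SeparatingLeft B₂)
    {L : (Fin 3 → ℝ) →ₗ[ℝ] ℝ} (hL : L ≠ 0) (ℓ : (Fin 3 → ℝ) → ℝ)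
    (hdiff : ∀ X P, L P = 0 → B₂ X P = B₁ X P + L X * ℓ P) {n : ℕ} {P : Fin n → Fin 3 → ℝ}
    (hP : ∀ i, L (P i) = 0) (h : closesB B₁ n P) : closesB (B₂ · ·) n P := by
  obtain ⟨c, hc, hc_chain⟩ := h
  obtain ⟨w, hw, hchain⟩ := exists_chainB_eq_chainB_add B₁ B₂ ℓ hdiff hP
  have hprod : ∏ i, B₂ (P i) (P i) = c := by
    obtain ⟨Z, hZ⟩ : ∃ Z, L Z ≠ 0 := by simpa [LinearMap.ext_iff] using hL
    have hLZ := apply_chainB_of_apply_eq_zero B₁ hP Z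
    rw [hc_chain, map_smul, smul_eq_mul] at hLZ
    simp only [hdiff _ _ (hP _), hP, zero_mul, add_zero]
    exact (mul_right_cancel₀ hZ hLZ).symm
  have hw0 : w = 0 := eq_zero_of_smul_add_scales_form hB₂ hsep hL hc hw fun X Y => by
    simpa only [hchain, hc_chain, hprod] using chainB_scales_form hB₂ P X Y
  exact ⟨c, hc, fun X => by rw [hchain, hc_chain, hw0, smul_zero, add_zero]⟩

section Circle

variable (a b r a₁ b₁ r₁ a₂ b₂ r₂ : ℝ)

def circleForm : BilinForm ℝ (Fin 3 → ℝ) :=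
  LinearMap.mk₂ ℝ (fun X Y => (X 0 - a * X 2) * (Y 0 - a * Y 2) +
      (X 1 - b * X 2) * (Y 1 - b * Y 2) - r ^ 2 * (X 2 * Y 2))
    (fun _ _ _ => by simp only [Pi.add_apply]; ring)
    (fun _ _ _ => by simp only [Pi.smul_apply, smul_eq_mul]; ring)
    (fun _ _ _ => by simp only [Pi.add_apply]; ring)
    (fun _ _ _ => by simp only [Pi.smul_apply, smul_eq_mul]; ring)

lemma circleForm_apply (X Y : Fin 3 → ℝ) :
    circleForm a b r X Y = (X 0 - a * X 2) * (Y 0 - a * Y 2) +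
      (X 1 - b * X 2) * (Y 1 - b * Y 2) - r ^ 2 * (X 2 * Y 2) :=
  rfl

lemma circleForm_isSymm : (circleForm a b r).IsSymm :=
  ⟨fun X Y => by simp only [circleForm_apply]; ring⟩

variable {r} in
lemma circleForm_separatingLeft (hr : r ≠ 0) : LinearMap.SeparatingLeft (circleForm a b r) := by
  intro w hw
  have h0 : w 0 - a * w 2 = 0 := by simpa [circleForm_apply] using hw ![1, 0, 0]
  have h1 : w 1 - b * w 2 = 0 := by simpa [circleForm_apply] using hw ![0, 1, 0]
  have h2 : r ^ 2 * w 2 = 0 := by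
    have := hw ![0, 0, 1]
    simp only [circleForm_apply, Matrix.cons_val_zero, Matrix.cons_val_one, Matrix.cons_val,
      mul_one, zero_sub, mul_neg] at this
    linear_combination -a * h0 - b * h1 - this
  have hw2 : w 2 = 0 := by simpa [hr] using h2
  rw [hw2, mul_zero, sub_zero] at h0 h1
  ext i
  fin_cases i <;> simp [h0, h1, hw2]

def radicalAxisForm : (Fin 3 → ℝ) →ₗ[ℝ] ℝ where
  toFun X := 2 * (a₂ - a₁) * X 0 + 2 * (b₂ - b₁) * X 1 +
    (a₁ ^ 2 + b₁ ^ 2 - r₁ ^ 2 - a₂ ^ 2 - b₂ ^ 2 + r₂ ^ 2) * X 2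
  map_add' X Y := by simp only [Pi.add_apply]; ring
  map_smul' t X := by simp only [Pi.smul_apply, smul_eq_mul, RingHom.id_apply]; ring

lemma radicalAxisForm_apply (X : Fin 3 → ℝ) :
    radicalAxisForm a₁ b₁ r₁ a₂ b₂ r₂ X = 2 * (a₂ - a₁) * X 0 + 2 * (b₂ - b₁) * X 1 +
      (a₁ ^ 2 + b₁ ^ 2 - r₁ ^ 2 - a₂ ^ 2 - b₂ ^ 2 + r₂ ^ 2) * X 2 :=
  rfl

variable {a₁ b₁ r₁ a₂ b₂ r₂} in
lemma radicalAxisForm_ne_zero (h : (a₁, b₁) ≠ (a₂, b₂)) :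
    radicalAxisForm a₁ b₁ r₁ a₂ b₂ r₂ ≠ 0 := by
  intro h0
  have hZ := LinearMap.congr_fun h0 ![a₂ - a₁, b₂ - b₁, 0]
  simp only [radicalAxisForm_apply, Matrix.cons_val_zero, Matrix.cons_val_one, Matrix.cons_val,
    mul_zero, add_zero, LinearMap.zero_apply] at hZ
  obtain ⟨ha, hb⟩ : a₂ = a₁ ∧ b₂ = b₁ := by
    constructor <;> nlinarith [sq_nonneg (a₂ - a₁), sq_nonneg (b₂ - b₁)]
  exact h (by rw [ha, hb])

lemma circleForm_eq_add (X Y : Fin 3 → ℝ) :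
    circleForm a₂ b₂ r₂ X Y = circleForm a₁ b₁ r₁ X Y -
      (X 2 * radicalAxisForm a₁ b₁ r₁ a₂ b₂ r₂ Y +
        Y 2 * radicalAxisForm a₁ b₁ r₁ a₂ b₂ r₂ X) / 2 := by
  simp only [circleForm_apply, radicalAxisForm_apply]
  ring

end Circle

theorem radical_axis_closing_general
    (a₁ b₁ a₂ b₂ r₁ r₂ : ℝ) (hcent : (a₁, b₁) ≠ (a₂, b₂)) (hr₂ : 0 < r₂)
    (B₁ B₂ : (Fin 3 → ℝ) → (Fin 3 → ℝ) → ℝ)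
    (hB₁ : B₁ = fun X Y => (X 0 - a₁ * X 2) * (Y 0 - a₁ * Y 2) +
      (X 1 - b₁ * X 2) * (Y 1 - b₁ * Y 2) - r₁ ^ 2 * (X 2 * Y 2))
    (hB₂ : B₂ = fun X Y => (X 0 - a₂ * X 2) * (Y 0 - a₂ * Y 2) +
      (X 1 - b₂ * X 2) * (Y 1 - b₂ * Y 2) - r₂ ^ 2 * (X 2 * Y 2))
    (n : ℕ) (P : Fin (2 * n) → (Fin 3 → ℝ))
    (hPW : ∀ i, 2 * (a₂ - a₁) * P i 0 + 2 * (b₂ - b₁) * P i 1 +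
      (a₁ ^ 2 + b₁ ^ 2 - r₁ ^ 2 - a₂ ^ 2 - b₂ ^ 2 + r₂ ^ 2) * P i 2 = 0)
    (hPB₁ : ∀ i, B₁ (P i) (P i) ≠ 0)
    (hclose : closesB B₁ (2 * n) P) :
    (∀ i, B₂ (P i) (P i) ≠ 0) ∧ closesB B₂ (2 * n) P := by
  subst hB₁ hB₂
  set L := radicalAxisForm a₁ b₁ r₁ a₂ b₂ r₂
  have hdiff : ∀ X Y, L Y = 0 →
      circleForm a₂ b₂ r₂ X Y = circleForm a₁ b₁ r₁ X Y + L X * (-Y 2 / 2) := fun X Y hY => by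
    rw [circleForm_eq_add, hY]
    ring
  have hP : ∀ i, L (P i) = 0 := hPW
  refine ⟨fun i => ?_, closesB_of_closesB_of_eq_add (circleForm a₁ b₁ r₁ · ·)
    (circleForm_isSymm a₂ b₂ r₂) (circleForm_separatingLeft a₂ b₂ hr₂.ne')
    (radicalAxisForm_ne_zero hcent) _ hdiff hP hclose⟩
  have hPP : circleForm a₂ b₂ r₂ (P i) (P i) = circleForm a₁ b₁ r₁ (P i) (P i) := by
    rw [hdiff _ _ (hP i), hP i, zero_mul, add_zero]
  exact hPP.trans_ne (hPB₁ i)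

/-- **Radical axis closing.** Let `B₁, B₂` be the polarized bilinear forms of two
distinct circles (centers `(a₁,b₁) ≠ (a₂,b₂)`, radii `r₁, r₂ > 0`), viewed as conics in
homogeneous coordinates, and let the points `P 0, …, P (2n-1)` lie on the radical axis
of the two circles. If the `P i` are off the first circle and have the closing property
with respect to `B₁`, then they are off the second circle and have the closing property
with respect to `B₂`. -/
theorem radical_axis_closing
    (a₁ b₁ a₂ b₂ r₁ r₂ : ℝ) (hcent : (a₁, b₁) ≠ (a₂, b₂)) (hr₁ : 0 < r₁) (hr₂ : 0 < r₂)
    (B₁ B₂ : (Fin 3 → ℝ) → (Fin 3 → ℝ) → ℝ)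
    (hB₁ : B₁ = fun X Y => (X 0 - a₁ * X 2) * (Y 0 - a₁ * Y 2) +
      (X 1 - b₁ * X 2) * (Y 1 - b₁ * Y 2) - r₁ ^ 2 * (X 2 * Y 2))
    (hB₂ : B₂ = fun X Y => (X 0 - a₂ * X 2) * (Y 0 - a₂ * Y 2) +
      (X 1 - b₂ * X 2) * (Y 1 - b₂ * Y 2) - r₂ ^ 2 * (X 2 * Y 2))
    (n : ℕ) (P : Fin (2 * n) → (Fin 3 → ℝ))
    (hP0 : ∀ i, P i ≠ 0)
    (hPW : ∀ i, 2 * (a₂ - a₁) * P i 0 + 2 * (b₂ - b₁) * P i 1 +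
      (a₁ ^ 2 + b₁ ^ 2 - r₁ ^ 2 - a₂ ^ 2 - b₂ ^ 2 + r₂ ^ 2) * P i 2 = 0)
    (hPB₁ : ∀ i, B₁ (P i) (P i) ≠ 0)
    (hclose : closesB B₁ (2 * n) P) :
    (∀ i, B₂ (P i) (P i) ≠ 0) ∧ closesB B₂ (2 * n) P :=
  radical_axis_closing_general a₁ b₁ a₂ b₂ r₁ r₂ hcent hr₂ B₁ B₂ hB₁ hB₂ n P hPW hPB₁ hclose
end
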